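/- arXiv:1310.3417 — 4 statements merged into one kernel-verified Lean document; each statement's English description precedes it below -/
import Mathlib

section
/- Let I be a finite set and U a vector space over ℚ. Suppose vectors u_{ij} ∈ U are given for all i ≠ j in I with u_{ij} = u_{ji}, such that for each three pairwise distinct i, j, k ∈ I, one of the four vectors u_{ij} ± u_{jk} ± u_{ki} vanishes. If |I| ≥ 5 and all u_{ij} are nonzero, then there exist vectors w_i ∈ U (i ∈ I) such that for all i ≠ j, u_{ij} = w_i − w_j or u_{ij} = −(w_i − w_j). -/
namespace SignTriAux

variable {I : Type*} {U : Type*} [AddCommGroup U] [Module ℚ U]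

lemma half {v : U} (h : v + v = 0) : v = 0 := by
  linear_combination (norm := module) (1/2 : ℚ) • h

abbrev Pot (u : I → I → U) (w : I → U) (J : Finset I) : Prop :=
  ∀ i ∈ J, ∀ j ∈ J, i ≠ j → u i j = w i - w j ∨ u i j = -(w i - w j)

lemma exists4 {ι : Type*} [DecidableEq ι] (J : Finset ι) (h : 4 ≤ J.card) :
    ∃ i1 ∈ J, ∃ i2 ∈ J, ∃ i3 ∈ J, ∃ i4 ∈ J,
      i1 ≠ i2 ∧ i1 ≠ i3 ∧ i1 ≠ i4 ∧ i2 ≠ i3 ∧ i2 ≠ i4 ∧ i3 ≠ i4 := by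
  obtain ⟨i1, h1⟩ := Finset.card_pos.mp (show 0 < J.card by omega)
  have e1 : 3 ≤ (J.erase i1).card := by rw [Finset.card_erase_of_mem h1]; omega
  obtain ⟨i2, h2⟩ := Finset.card_pos.mp (show 0 < (J.erase i1).card by omega)
  have e2 : 2 ≤ ((J.erase i1).erase i2).card := by rw [Finset.card_erase_of_mem h2]; omega
  obtain ⟨i3, h3⟩ := Finset.card_pos.mp (show 0 < ((J.erase i1).erase i2).card by omega)
  have e3 : 1 ≤ (((J.erase i1).erase i2).erase i3).card := by
    rw [Finset.card_erase_of_mem h3]; omega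
  obtain ⟨i4, h4⟩ := Finset.card_pos.mp (show 0 < (((J.erase i1).erase i2).erase i3).card by omega)
  simp only [Finset.mem_erase] at h2 h3 h4
  exact ⟨i1, h1, i2, h2.2, i3, h3.2.2, i4, h4.2.2.2, Ne.symm h2.1, Ne.symm h3.2.1,
    Ne.symm h4.2.2.1, Ne.symm h3.1, Ne.symm h4.2.1, Ne.symm h4.1⟩

lemma exists5 {ι : Type*} [DecidableEq ι] (J : Finset ι) (h : 5 ≤ J.card) :
    ∃ i1 ∈ J, ∃ i2 ∈ J, ∃ i3 ∈ J, ∃ i4 ∈ J, ∃ i5 ∈ J,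
      i1 ≠ i2 ∧ i1 ≠ i3 ∧ i1 ≠ i4 ∧ i1 ≠ i5 ∧ i2 ≠ i3 ∧ i2 ≠ i4 ∧ i2 ≠ i5 ∧
      i3 ≠ i4 ∧ i3 ≠ i5 ∧ i4 ≠ i5 := by
  obtain ⟨i1, h1⟩ := Finset.card_pos.mp (show 0 < J.card by omega)
  have e1 : 4 ≤ (J.erase i1).card := by rw [Finset.card_erase_of_mem h1]; omega
  obtain ⟨i2, h2, i3, h3, i4, h4, i5, h5, d23, d24, d25, d34, d35, d45⟩ :=
    exists4 (J.erase i1) e1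
  simp only [Finset.mem_erase] at h2 h3 h4 h5
  exact ⟨i1, h1, i2, h2.2, i3, h3.2, i4, h4.2, i5, h5.2, Ne.symm h2.1, Ne.symm h3.1,
    Ne.symm h4.1, Ne.symm h5.1, d23, d24, d25, d34, d35, d45⟩

end SignTriAux

namespace SignTriAux2

variable {α : Type*}

lemma pairForce {a b fi gi fj gj : α} (hab : a ≠ b)
    (hai : a = fi ∨ a = gi) (hbi : b = fi ∨ b = gi)
    (haj : a = fj ∨ a = gj) (hbj : b = fj ∨ b = gj) :
    (fi = fj ∧ gi = gj) ∨ (fi = gj ∧ gi = fj) := by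
  have hi : (fi = a ∧ gi = b) ∨ (fi = b ∧ gi = a) := by
    rcases hai with rfl|rfl <;> rcases hbi with h|h <;> tauto
  have hj : (fj = a ∧ gj = b) ∨ (fj = b ∧ gj = a) := by
    rcases haj with rfl|rfl <;> rcases hbj with h|h <;> tauto
  rcases hi with ⟨rfl, rfl⟩|⟨rfl, rfl⟩ <;> rcases hj with ⟨h1, h2⟩|⟨h1, h2⟩ <;> tauto

lemma memOfPair {a b x fi gi : α} (hab : a ≠ b)
    (ha : a = fi ∨ a = gi) (hb : b = fi ∨ b = gi) (hx : x = fi ∨ x = gi) :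
    x = a ∨ x = b := by
  rcases ha with rfl|rfl <;> rcases hb with h|h <;> rcases hx with h'|h' <;>
    first | tauto | (subst h; tauto)

lemma helly {ι : Type*} (f g : ι → α) (J : Finset ι) (hcard : 4 ≤ J.card)
    (hdis : ∀ i ∈ J, ∀ j ∈ J, i ≠ j →
      ¬((f i = f j ∧ g i = g j) ∨ (f i = g j ∧ g i = f j)))
    (hint : ∀ i ∈ J, ∀ j ∈ J, i ≠ j →
      ∃ c, (c = f i ∨ c = g i) ∧ (c = f j ∨ c = g j)) :
    ∃ c, ∀ i ∈ J, c = f i ∨ c = g i := by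
  classical
  obtain ⟨i1, h1, i2, h2, i3, h3, i4, h4, h12, h13, h14, h23, h24, h34⟩ :=
    SignTriAux.exists4 J hcard
  have key : ∀ c, (c = f i1 ∨ c = g i1) → (c = f i2 ∨ c = g i2) → (c = f i3 ∨ c = g i3) →
      ∀ i ∈ J, c = f i ∨ c = g i := by
    intro c hc1 hc2 hc3 i hi
    by_contra hci
    push_neg at hci
    obtain ⟨hcf, hcg⟩ := hci
    have hne1 : i ≠ i1 := by rintro rfl; rcases hc1 with h|h; exacts [hcf h, hcg h]
    have hne2 : i ≠ i2 := by rintro rfl; rcases hc2 with h|h; exacts [hcf h, hcg h]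
    have hne3 : i ≠ i3 := by rintro rfl; rcases hc3 with h|h; exacts [hcf h, hcg h]
    obtain ⟨a1, ha1i, ha1⟩ := hint i hi i1 h1 hne1
    obtain ⟨a2, ha2i, ha2⟩ := hint i hi i2 h2 hne2
    obtain ⟨a3, ha3i, ha3⟩ := hint i hi i3 h3 hne3
    have ha1c : c ≠ a1 := by rintro rfl; rcases ha1i with h|h; exacts [hcf h, hcg h]
    have ha2c : c ≠ a2 := by rintro rfl; rcases ha2i with h|h; exacts [hcf h, hcg h]
    have ha3c : c ≠ a3 := by rintro rfl; rcases ha3i with h|h; exacts [hcf h, hcg h]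
    have d12 : a1 ≠ a2 := by
      rintro rfl
      exact hdis i1 h1 i2 h2 h12 (pairForce ha1c hc1 ha1 hc2 ha2)
    have d13 : a1 ≠ a3 := by
      rintro rfl
      exact hdis i1 h1 i3 h3 h13 (pairForce ha1c hc1 ha1 hc3 ha3)
    have d23 : a2 ≠ a3 := by
      rintro rfl
      exact hdis i2 h2 i3 h3 h23 (pairForce ha2c hc2 ha2 hc3 ha3)
    rcases ha1i with h|h <;> rcases ha2i with h'|h' <;> rcases ha3i with h''|h'' <;> simp_all
  obtain ⟨c, hcA, hcB⟩ := hint i1 h1 i2 h2 h12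
  by_cases hc3 : c = f i3 ∨ c = g i3
  · exact ⟨c, key c hcA hcB hc3⟩
  obtain ⟨d, hdA, hdB⟩ := hint i1 h1 i3 h3 h13
  by_cases hd2 : d = f i2 ∨ d = g i2
  · exact ⟨d, key d hdA hd2 hdB⟩
  obtain ⟨e, heA, heB⟩ := hint i2 h2 i3 h3 h23
  by_cases he1 : e = f i1 ∨ e = g i1
  · exact ⟨e, key e he1 heA heB⟩
  exfalso
  have hcd : c ≠ d := by rintro rfl; exact hc3 hdB
  have hce : c ≠ e := by rintro rfl; exact hc3 heB
  have hde : d ≠ e := by rintro rfl; exact hd2 heA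
  obtain ⟨x, hx4, hx1⟩ := hint i4 h4 i1 h1 (Ne.symm h14)
  obtain ⟨y, hy4, hy2⟩ := hint i4 h4 i2 h2 (Ne.symm h24)
  obtain ⟨z, hz4, hz3⟩ := hint i4 h4 i3 h3 (Ne.symm h34)
  have hx : x = c ∨ x = d := memOfPair hcd hcA hdA hx1
  have hy : y = c ∨ y = e := memOfPair hce hcB heA hy2
  have hz : z = d ∨ z = e := memOfPair hde hdB heB hz3
  rcases hx with rfl|rfl <;> rcases hy with rfl|rfl <;> rcases hz with rfl|rfl <;>
    first
      | exact hdis i4 h4 i1 h1 (Ne.symm h14) (pairForce hcd hx4 hz4 hcA hdA)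
      | exact hdis i4 h4 i1 h1 (Ne.symm h14) (pairForce hcd hy4 hx4 hcA hdA)
      | exact hdis i4 h4 i2 h2 (Ne.symm h24) (pairForce hce hx4 hy4 hcB heA)
      | exact hdis i4 h4 i2 h2 (Ne.symm h24) (pairForce hce hx4 hz4 hcB heA)
      | exact hdis i4 h4 i2 h2 (Ne.symm h24) (pairForce hce hy4 hz4 hcB heA)
      | exact hdis i4 h4 i3 h3 (Ne.symm h34) (pairForce hde hx4 hy4 hdB heB)
      | exact hdis i4 h4 i3 h3 (Ne.symm h34) (pairForce hde hz4 hy4 hdB heB)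

end SignTriAux2
namespace SignTriAux3

open SignTriAux SignTriAux2

variable {I : Type*} {U : Type*} [AddCommGroup U] [Module ℚ U]

lemma pairSum {a b m v : U} (hab : a ≠ b)
    (ha : a = m + v ∨ a = m - v) (hb : b = m + v ∨ b = m - v) : a + b = m + m := by
  rcases ha with rfl|rfl <;> rcases hb with h|h
  · exact absurd h.symm hab
  · subst h; abel
  · subst h; abel
  · exact absurd h.symm hab

lemma signSum {v a b c : U} (hv : v ≠ 0)
    (ha : a = v ∨ a = -v) (hb : b = v ∨ b = -v) (hc : c = v ∨ c = -v)
    (H : a + b + c = 0 ∨ a + b - c = 0 ∨ a - b + c = 0 ∨ a - b - c = 0) : False := by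
  rcases ha with rfl|rfl <;> rcases hb with rfl|rfl <;> rcases hc with rfl|rfl <;>
    rcases H with H|H|H|H <;> apply hv <;>
    first
      | linear_combination (norm := module) H
      | linear_combination (norm := module) -H
      | linear_combination (norm := module) (1/3 : ℚ) • H
      | linear_combination (norm := module) (-1/3 : ℚ) • H

variable (u : I → I → U)

lemma pairInt (hsym : ∀ i j, u i j = u j i)
    (htri : ∀ i j k : I, i ≠ j → j ≠ k → i ≠ k →
      u i j + u j k + u k i = 0 ∨ u i j + u j k - u k i = 0 ∨
      u i j - u j k + u k i = 0 ∨ u i j - u j k - u k i = 0)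
    {w : I → U} {J : Finset I} (hw : Pot u w J)
    {x i j : I} (hx : x ∉ J) (hi : i ∈ J) (hj : j ∈ J) (hij : i ≠ j) :
    ∃ c, (c = w i + u x i ∨ c = w i - u x i) ∧ (c = w j + u x j ∨ c = w j - u x j) := by
  have hxi : x ≠ i := by rintro rfl; exact hx hi
  have hxj : x ≠ j := by rintro rfl; exact hx hj
  have hs := hsym j x
  rcases htri x i j hxi hij hxj with h|h|h|h <;> rcases hw i hi j hj hij with h2|h2
  · exact ⟨w i + u x i, Or.inl rfl, Or.inr (by linear_combination (norm := module) h - h2 - hs)⟩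
  · exact ⟨w i - u x i, Or.inr rfl, Or.inl (by linear_combination (norm := module) -h + h2 + hs)⟩
  · exact ⟨w i + u x i, Or.inl rfl, Or.inl (by linear_combination (norm := module) h - h2 + hs)⟩
  · exact ⟨w i - u x i, Or.inr rfl, Or.inr (by linear_combination (norm := module) -h + h2 - hs)⟩
  · exact ⟨w i - u x i, Or.inr rfl, Or.inl (by linear_combination (norm := module) -h - h2 + hs)⟩
  · exact ⟨w i + u x i, Or.inl rfl, Or.inr (by linear_combination (norm := module) h + h2 - hs)⟩
  · exact ⟨w i - u x i, Or.inr rfl, Or.inr (by linear_combination (norm := module) -h - h2 - hs)⟩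
  · exact ⟨w i + u x i, Or.inl rfl, Or.inl (by linear_combination (norm := module) h + h2 + hs)⟩

lemma glue [DecidableEq I] (hsym : ∀ i j, u i j = u j i) (w : I → U) {J : Finset I} {x : I}
    (hx : x ∉ J) (hw : Pot u w J) (c : U)
    (hc : ∀ i ∈ J, c = w i + u x i ∨ c = w i - u x i) :
    Pot u (Function.update w x c) (insert x J) := by
  intro i hi j hj hij
  rcases Finset.mem_insert.mp hi with rfl|hiJ
  · rcases Finset.mem_insert.mp hj with rfl|hjJ
    · exact absurd rfl hij
    · have hjx : j ≠ i := by rintro rfl; exact hx hjJ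
      rw [Function.update_self, Function.update_of_ne hjx]
      rcases hc j hjJ with h|h
      · left; linear_combination (norm := module) -h
      · right; linear_combination (norm := module) h
  · rcases Finset.mem_insert.mp hj with rfl|hjJ
    · have hix : i ≠ j := by rintro rfl; exact hx hiJ
      rw [Function.update_self, Function.update_of_ne hix]
      have hs := hsym i j
      rcases hc i hiJ with h|h
      · right; linear_combination (norm := module) hs - h
      · left; linear_combination (norm := module) hs + h
    · have hix : i ≠ x := by rintro rfl; exact hx hiJ
      have hjx : j ≠ x := by rintro rfl; exact hx hjJ
      rw [Function.update_of_ne hix, Function.update_of_ne hjx]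
      exact hw i hiJ j hjJ hij

lemma extend [DecidableEq I] (hsym : ∀ i j, u i j = u j i)
    (hne : ∀ i j, i ≠ j → u i j ≠ 0)
    (htri : ∀ i j k : I, i ≠ j → j ≠ k → i ≠ k →
      u i j + u j k + u k i = 0 ∨ u i j + u j k - u k i = 0 ∨
      u i j - u j k + u k i = 0 ∨ u i j - u j k - u k i = 0)
    {J : Finset I} (hJ : 4 ≤ J.card) {x : I} (hx : x ∉ J)
    {w : I → U} (hw : Pot u w J) :
    ∃ w', Pot u w' (insert x J) := by
  have hinj : ∀ i ∈ J, ∀ j ∈ J, i ≠ j → w i ≠ w j := by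
    intro i hi j hj hij he
    rcases hw i hi j hj hij with h|h <;> apply hne i j hij <;> rw [h, he] <;> simp
  have hdis : ∀ i ∈ J, ∀ j ∈ J, i ≠ j →
      ¬((w i + u x i = w j + u x j ∧ w i - u x i = w j - u x j) ∨
        (w i + u x i = w j - u x j ∧ w i - u x i = w j + u x j)) := by
    intro i hi j hj hij h
    apply hinj i hi j hj hij
    have hsum : (w i - w j) + (w i - w j) = 0 := by
      rcases h with ⟨h1, h2⟩|⟨h1, h2⟩ <;> linear_combination (norm := module) h1 + h2
    have h0 := half hsum
    linear_combination (norm := module) h0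
  obtain ⟨c, hc⟩ := helly (fun i => w i + u x i) (fun i => w i - u x i) J hJ hdis
    (fun i hi j hj hij => pairInt u hsym htri hw hx hi hj hij)
  exact ⟨_, glue u hsym w hx hw c hc⟩

end SignTriAux3
namespace SignTriAux4

open SignTriAux SignTriAux2 SignTriAux3

variable {I : Type*} {U : Type*} [AddCommGroup U] [Module ℚ U]

lemma potPair {u : I → I → U} (hsym : ∀ i j, u i j = u j i) {w : I → U} {i j : I}
    (h : u i j = w i - w j ∨ u i j = -(w i - w j)) :
    u j i = w j - w i ∨ u j i = -(w j - w i) := by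
  rcases h with h|h
  · right; rw [hsym j i]; linear_combination (norm := module) h
  · left; rw [hsym j i]; linear_combination (norm := module) h

lemma potTriple [DecidableEq I] {u : I → I → U} (hsym : ∀ i j, u i j = u j i) {w : I → U} {p q s : I}
    (h1 : u p q = w p - w q ∨ u p q = -(w p - w q))
    (h2 : u p s = w p - w s ∨ u p s = -(w p - w s))
    (h3 : u q s = w q - w s ∨ u q s = -(w q - w s)) :
    Pot u w ({p, q, s} : Finset I) := by
  intro i hi j hj hij
  simp only [Finset.mem_insert, Finset.mem_singleton] at hi hj
  rcases hi with rfl|rfl|rfl <;> rcases hj with rfl|rfl|rfl <;>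
    first
      | exact absurd rfl hij
      | exact h1 | exact h2 | exact h3
      | exact potPair hsym h1 | exact potPair hsym h2 | exact potPair hsym h3

lemma triPot [DecidableEq I] (u : I → I → U) (hsym : ∀ i j, u i j = u j i)
    (htri : ∀ i j k : I, i ≠ j → j ≠ k → i ≠ k →
      u i j + u j k + u k i = 0 ∨ u i j + u j k - u k i = 0 ∨
      u i j - u j k + u k i = 0 ∨ u i j - u j k - u k i = 0)
    {p q s : I} (hpq : p ≠ q) (hps : p ≠ s) (hqs : q ≠ s) :
    ∃ w : I → U, Pot u w ({p, q, s} : Finset I) := by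
  have hqp : ¬(q = p) := fun h => hpq h.symm
  have hsp : ¬(s = p) := fun h => hps h.symm
  have hsq : ¬(s = q) := fun h => hqs h.symm
  obtain ⟨v, hv2, hv3⟩ : ∃ v : U, (u p s = 0 - v ∨ u p s = -(0 - v)) ∧
      (u q s = -u p q - v ∨ u q s = -(-u p q - v)) := by
    rcases htri p q s hpq hqs hps with h|h|h|h
    · exact ⟨u s p, Or.inr (by rw [hsym p s]; abel),
        Or.inl (by linear_combination (norm := module) h)⟩
    · exact ⟨-u s p, Or.inl (by rw [hsym p s]; abel),
        Or.inl (by linear_combination (norm := module) h)⟩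
    · exact ⟨u s p, Or.inr (by rw [hsym p s]; abel),
        Or.inr (by linear_combination (norm := module) -h)⟩
    · exact ⟨-u s p, Or.inl (by rw [hsym p s]; abel),
        Or.inr (by linear_combination (norm := module) -h)⟩
  refine ⟨fun t => if t = p then 0 else if t = q then -u p q else v,
    potTriple hsym ?_ ?_ ?_⟩ <;>
    simp only [hqp, hsp, hsq, if_true, if_false, eq_self_iff_true, ite_true, ite_false]
  · exact Or.inl (by abel)
  · exact hv2
  · exact hv3

lemma quad [DecidableEq I] (u : I → I → U) (hsym : ∀ i j, u i j = u j i)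
    (htri : ∀ i j k : I, i ≠ j → j ≠ k → i ≠ k →
      u i j + u j k + u k i = 0 ∨ u i j + u j k - u k i = 0 ∨
      u i j - u j k + u k i = 0 ∨ u i j - u j k - u k i = 0)
    {p q s r : I} (hpq : p ≠ q) (hps : p ≠ s) (hqs : q ≠ s)
    (hrp : r ≠ p) (hrq : r ≠ q) (hrs : r ≠ s) :
    (∃ w, Pot u w (insert r {p, q, s} : Finset I)) ∨
      u r s = u p q ∨ u r s = -u p q := by
  obtain ⟨w, hw⟩ := triPot u hsym htri hpq hps hqs
  have hrJ : r ∉ ({p, q, s} : Finset I) := by simp [hrp, hrq, hrs]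
  have hp : p ∈ ({p, q, s} : Finset I) := by simp
  have hq : q ∈ ({p, q, s} : Finset I) := by simp
  have hs' : s ∈ ({p, q, s} : Finset I) := by simp
  obtain ⟨c, hcp, hcq⟩ := pairInt u hsym htri hw hrJ hp hq hpq
  by_cases hcs : c = w s + u r s ∨ c = w s - u r s
  · left
    refine ⟨_, glue u hsym w hrJ hw c ?_⟩
    intro i hi
    simp only [Finset.mem_insert, Finset.mem_singleton] at hi
    rcases hi with rfl|rfl|rfl
    exacts [hcp, hcq, hcs]
  obtain ⟨d, hdp, hds⟩ := pairInt u hsym htri hw hrJ hp hs' hps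
  by_cases hd2 : d = w q + u r q ∨ d = w q - u r q
  · left
    refine ⟨_, glue u hsym w hrJ hw d ?_⟩
    intro i hi
    simp only [Finset.mem_insert, Finset.mem_singleton] at hi
    rcases hi with rfl|rfl|rfl
    exacts [hdp, hd2, hds]
  obtain ⟨e, heq, hes⟩ := pairInt u hsym htri hw hrJ hq hs' hqs
  by_cases he1 : e = w p + u r p ∨ e = w p - u r p
  · left
    refine ⟨_, glue u hsym w hrJ hw e ?_⟩
    intro i hi
    simp only [Finset.mem_insert, Finset.mem_singleton] at hi
    rcases hi with rfl|rfl|rfl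
    exacts [he1, heq, hes]
  right
  have hcd : c ≠ d := by rintro rfl; exact hcs hds
  have hce : c ≠ e := by rintro rfl; exact hcs hes
  have hde : d ≠ e := by rintro rfl; exact hd2 heq
  have h1 : c + d = w p + w p := pairSum hcd hcp hdp
  have h2 : c + e = w q + w q := pairSum hce hcq heq
  have h3 : d + e = w s + w s := pairSum hde hds hes
  rcases hds with hd'|hd' <;> rcases hw p hp q hq hpq with h4|h4
  · left
    have hh : (u r s - u p q) + (u r s - u p q) = 0 := by
      linear_combination (norm := module) h1 - h2 + h3 - (2:ℚ) • hd' - (2:ℚ) • h4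
    linear_combination (norm := module) half hh
  · right
    have hh : (u r s + u p q) + (u r s + u p q) = 0 := by
      linear_combination (norm := module) h1 - h2 + h3 - (2:ℚ) • hd' + (2:ℚ) • h4
    linear_combination (norm := module) half hh
  · right
    have hh : (u r s + u p q) + (u r s + u p q) = 0 := by
      linear_combination (norm := module) -h1 + h2 - h3 + (2:ℚ) • hd' + (2:ℚ) • h4
    linear_combination (norm := module) half hh
  · left
    have hh : (u r s - u p q) + (u r s - u p q) = 0 := by
      linear_combination (norm := module) -h1 + h2 - h3 + (2:ℚ) • hd' - (2:ℚ) • h4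
    linear_combination (norm := module) half hh

end SignTriAux4

open SignTriAux SignTriAux2 SignTriAux3 SignTriAux4 in
/-- Lemma from linear algebra: if `|I| ≥ 5` and all `u i j` are nonzero, then
alternative (i) holds. -/
theorem exists_potential_of_sign_triangle {I : Type*} [Fintype I]
    {U : Type*} [AddCommGroup U] [Module ℚ U]
    (u : I → I → U) (hsym : ∀ i j, u i j = u j i)
    (hne : ∀ i j, i ≠ j → u i j ≠ 0)
    (htri : ∀ i j k : I, i ≠ j → j ≠ k → i ≠ k →
      u i j + u j k + u k i = 0 ∨ u i j + u j k - u k i = 0 ∨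
      u i j - u j k + u k i = 0 ∨ u i j - u j k - u k i = 0)
    (hcard : 5 ≤ Fintype.card I) :
    ∃ w : I → U, ∀ i j, i ≠ j →
      u i j = w i - w j ∨ u i j = -(w i - w j) := by
  classical
  obtain ⟨i1, -, i2, -, i3, -, i4, -, i5, -,
      h12, h13, h14, h15, h23, h24, h25, h34, h35, h45⟩ :=
    exists5 (Finset.univ : Finset I) (by simpa using hcard)
  have card4 : ∀ {p q s r : I}, p ≠ q → p ≠ s → q ≠ s → r ≠ p → r ≠ q → r ≠ s →
      (insert r ({p, q, s} : Finset I)).card = 4 := by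
    intro p q s r hpq hps hqs hrp hrq hrs
    rw [Finset.card_insert_of_notMem (by simp [hrp, hrq, hrs]),
      Finset.card_insert_of_notMem (by simp [hpq, hps]),
      Finset.card_insert_of_notMem (by simp [hqs]), Finset.card_singleton]
  have hQ : ∃ Q : Finset I, 4 ≤ Q.card ∧ ∃ w, Pot u w Q := by
    rcases quad u hsym htri h12 h15 h25 (Ne.symm h14) (Ne.symm h24) h45 with hg|hA
    · exact ⟨_, le_of_eq (card4 h12 h15 h25 (Ne.symm h14) (Ne.symm h24) h45).symm, hg⟩
    rcases quad u hsym htri h13 h15 h35 (Ne.symm h14) (Ne.symm h34) h45 with hg|hB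
    · exact ⟨_, le_of_eq (card4 h13 h15 h35 (Ne.symm h14) (Ne.symm h34) h45).symm, hg⟩
    rcases quad u hsym htri h23 h25 h35 (Ne.symm h24) (Ne.symm h34) h45 with hg|hC
    · exact ⟨_, le_of_eq (card4 h23 h25 h35 (Ne.symm h24) (Ne.symm h34) h45).symm, hg⟩
    exfalso
    have ha : u i1 i2 = u i4 i5 ∨ u i1 i2 = -u i4 i5 := by
      rcases hA with h|h
      · exact Or.inl h.symm
      · exact Or.inr (by linear_combination (norm := module) h)
    have hb : u i2 i3 = u i4 i5 ∨ u i2 i3 = -u i4 i5 := by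
      rcases hC with h|h
      · exact Or.inl h.symm
      · exact Or.inr (by linear_combination (norm := module) h)
    have hc : u i1 i3 = u i4 i5 ∨ u i1 i3 = -u i4 i5 := by
      rcases hB with h|h
      · exact Or.inl h.symm
      · exact Or.inr (by linear_combination (norm := module) h)
    have H := htri i1 i2 i3 h12 h23 h13
    rw [hsym i3 i1] at H
    exact signSum (hne i4 i5 h45) ha hb hc H
  obtain ⟨Q, hQ4, w0, hw0⟩ := hQ
  have main : ∀ n (J : Finset I), Q ⊆ J → J.card = n → ∃ w, Pot u w J := by
    intro n
    induction n with
    | zero =>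
      intro J hQJ hJ
      have hle := Finset.card_le_card hQJ
      omega
    | succ n ih =>
      intro J hQJ hJ
      by_cases hx : ∃ x ∈ J, x ∉ Q
      · obtain ⟨x, hxJ, hxQ⟩ := hx
        have hQe : Q ⊆ J.erase x :=
          fun y hy => Finset.mem_erase.mpr ⟨fun h => hxQ (h ▸ hy), hQJ hy⟩
        obtain ⟨w, hw⟩ := ih (J.erase x) hQe
          (by rw [Finset.card_erase_of_mem hxJ, hJ]; omega)
        have h4 : 4 ≤ (J.erase x).card := le_trans hQ4 (Finset.card_le_card hQe)
        obtain ⟨w', hw'⟩ := extend u hsym hne htri h4 (Finset.notMem_erase x J) hw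
        rw [Finset.insert_erase hxJ] at hw'
        exact ⟨w', hw'⟩
      · push_neg at hx
        have hJQ : J = Q := Finset.Subset.antisymm hx hQJ
        exact hJQ ▸ ⟨w0, hw0⟩
  obtain ⟨w, hw⟩ := main Finset.univ.card Finset.univ (Finset.subset_univ Q) rfl
  exact ⟨w, fun i j hij => hw i (Finset.mem_univ i) j (Finset.mem_univ j) hij⟩
end

section
/- Let F be a field with a valuation v into an ordered abelian group with adjoined zero, and let α be an element with α > 1. Define a relation on a finite index set I by i ∼ j iff i = j or v(ℓ_{ij}) ≤ γ, where ℓ_{ij} = ℓ_{ji} ∈ F are given elements with the property that for all pairwise distinct i, j, k there exist signs ε, ε' ∈ {−1,1} such that v(ℓ_{ij} + ε ℓ_{jk} + ε' ℓ_{ki}) ≤ α⁻¹. If γ ≥ α⁻¹, then ∼ is transitive (hence an equivalence relation). -/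
/-- The relation `i ∼ j ⇔ i = j ∨ v (ℓ i j) ≤ γ` is transitive when `γ ≥ α⁻¹`. -/
theorem valuation_relation_transitive {F Γ I : Type*} [Field F]
    [LinearOrderedCommGroupWithZero Γ] [Fintype I]
    (v : Valuation F Γ) (α γ : Γ) (hα : 1 < α)
    (ℓ : I → I → F) (hsym : ∀ i j, ℓ i j = ℓ j i)
    (htri : ∀ i j k : I, i ≠ j → j ≠ k → i ≠ k →
      ∃ ε ε' : F, (ε = 1 ∨ ε = -1) ∧ (ε' = 1 ∨ ε' = -1) ∧
        v (ℓ i j + ε * ℓ j k + ε' * ℓ k i) ≤ α⁻¹)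
    (hγ : α⁻¹ ≤ γ) :
    ∀ i j k : I, (i = j ∨ v (ℓ i j) ≤ γ) → (j = k ∨ v (ℓ j k) ≤ γ) →
      (i = k ∨ v (ℓ i k) ≤ γ) := by
  intro i j k hij hjk
  rcases hij with rfl | hij
  · exact hjk
  rcases hjk with rfl | hjk
  · right; exact hij
  by_cases hik : i = k
  · exact Or.inl hik
  right
  by_cases hij' : i = j
  · subst hij'; exact hjk
  by_cases hjk' : j = k
  · subst hjk'; exact hij
  obtain ⟨ε, ε', hε, hε', hsum⟩ := htri i j k hij' hjk' hik
  have hvε : v ε = 1 := by rcases hε with rfl | rfl <;> simp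
  have hvε' : v ε' = 1 := by rcases hε' with rfl | rfl <;> simp
  have key : ε' * ℓ k i = (ℓ i j + ε * ℓ j k + ε' * ℓ k i) - ℓ i j - ε * ℓ j k := by
    ring
  have h1 : v (ε' * ℓ k i) ≤ γ := by
    rw [key]
    refine le_trans (v.map_sub _ _) (max_le (le_trans (v.map_sub _ _)
      (max_le (le_trans hsum hγ) hij)) ?_)
    rw [v.map_mul, hvε, one_mul]
    exact hjk
  rw [v.map_mul, hvε', one_mul] at h1
  rw [hsym i k]
  exact h1
end

section
/- Let R be an integral domain, F a field containing R, and y ∈ F. Then y is integral over R if and only if v(y) ≤ 1 for every valuation v of F (with values in an ordered abelian group with adjoined zero) satisfying v(x) ≤ 1 for all x ∈ R. -/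
/-! Valuation rings are integrally closed, and (Chevalley) an element of `F` outside the integral
closure of `R` is avoided by some valuation subring containing `R`: if `y` is not integral, `y⁻¹`
is a nonunit of `R[y⁻¹]`, and a valuation subring dominating a localization of `R[y⁻¹]` at a
maximal ideal containing `y⁻¹` cannot contain `y`. So the integral closure of `R` is the
intersection of the valuation subrings containing `R`, and these are exactly the unit balls of the
valuations that are `≤ 1` on `R`. -/

universe u

open Polynomial

theorem Subring.isIntegral_iff_exists_monic_coeff_mem {A : Type*} [CommRing A] (R : Subring A)
    (y : A) :
    IsIntegral R y ↔ ∃ p : A[X], p.Monic ∧ (∀ i, p.coeff i ∈ R) ∧ p.eval y = 0 := by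
  constructor
  · rintro ⟨q, hq, hqy⟩
    refine ⟨q.map (algebraMap R A), hq.map _, fun i => ?_, by rwa [eval_map, ← aeval_def]⟩
    rw [coeff_map]
    exact (q.coeff i).2
  · rintro ⟨p, hp, hcoeff, hpy⟩
    have hlifts : p ∈ lifts (algebraMap R A) :=
      (lifts_iff_coeff_lifts p).2 fun i => ⟨⟨_, hcoeff i⟩, rfl⟩
    obtain ⟨q, hqp, -, hq⟩ := lifts_and_natDegree_eq_and_monic hlifts hp
    exact ⟨q, hq, by rw [eval₂_eq_eval_map, hqp, hpy]⟩

theorem Subring.isIntegral_iff_forall_valuationSubring {K : Type*} [Field K] (R : Subring K)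
    (y : K) : IsIntegral R y ↔ ∀ V : ValuationSubring K, R ≤ V.toSubring → y ∈ V := by
  have hclosure := iInf_valuationSubring_superset (s := (R : Set K))
  rw [Subring.closure_eq] at hclosure
  rw [← mem_integralClosure_iff, ← Subalgebra.mem_toSubring, ← hclosure, Subring.mem_iInf]
  exact Subtype.forall

theorem Subring.forall_valuation_le_one_iff_forall_valuationSubring {F : Type u} [Field F]
    (R : Subring F) (y : F) :
    (∀ (Γ : Type u) (_ : LinearOrderedCommGroupWithZero Γ) (v : Valuation F Γ),
      (∀ x ∈ R, v x ≤ 1) → v y ≤ 1) ↔ ∀ V : ValuationSubring F, R ≤ V.toSubring → y ∈ V := by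
  constructor
  · intro h V hRV
    exact (V.valuation_le_one_iff y).1 <|
      h _ inferInstance V.valuation fun x hx => (V.valuation_le_one_iff x).2 (hRV hx)
  · intro h Γ _ v hv
    exact h v.valuationSubring hv

theorem integral_iff_valuation_le_one {F : Type u} [Field F]
    (R : Subring F) (y : F) :
    (∃ p : Polynomial F, p.Monic ∧ (∀ i, p.coeff i ∈ R) ∧ p.eval y = 0) ↔
    ∀ (Γ : Type u) (_ : LinearOrderedCommGroupWithZero Γ) (v : Valuation F Γ),
      (∀ x ∈ R, v x ≤ 1) → v y ≤ 1 := by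
  rw [← R.isIntegral_iff_exists_monic_coeff_mem, R.isIntegral_iff_forall_valuationSubring,
    R.forall_valuation_le_one_iff_forall_valuationSubring]
end

section
/- Let R be a factorial domain (UFD) contained in a field F, and let y ∈ F be algebraic over R (i.e., over the fraction field of R) but not integral over R. Then the ideal c ⊲ R consisting of all x ∈ R such that x·y is integral over R is a principal ideal. -/
/-!
Over `K = Frac R` the minimal polynomial of `x • y` is the minimal polynomial `q` of `y` with
its roots scaled by `x`, and since `R` is integrally closed, `x • y` is integral over `R` exactly
when that polynomial has coefficients in `R`, i.e. when `den (qᵢ) ∣ x ^ (deg q - i)` for all `i`.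
These conditions are stable under taking gcds, and an ideal containing a common divisor of any
two of its nonzero elements is generated by an element that is minimal for strict divisibility.
-/

open Polynomial IsFractionRing

theorem gcd_pow_dvd_pow_gcd {α : Type*} [CommMonoidWithZero α] [GCDMonoid α] (x y : α)
    (m : ℕ) : gcd (x ^ m) (y ^ m) ∣ gcd x y ^ m := by
  obtain ⟨x', y', hx, hy, hunit⟩ := extract_gcd x y
  have hunit' : IsUnit (gcd (x' ^ m) (y' ^ m)) :=
    isUnit_of_dvd_unit
      (gcd_pow_left_dvd_pow_gcd.trans (pow_dvd_pow_of_dvd gcd_pow_right_dvd_pow_gcd m))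
      ((hunit.pow m).pow m)
  have hxm : x ^ m = gcd x y ^ m * x' ^ m := by rw [← mul_pow, ← hx]
  have hym : y ^ m = gcd x y ^ m * y' ^ m := by rw [← mul_pow, ← hy]
  calc gcd (x ^ m) (y ^ m) = gcd (gcd x y ^ m * x' ^ m) (gcd x y ^ m * y' ^ m) := by
        rw [← hxm, ← hym]
    _ ∣ gcd x y ^ m * gcd (x' ^ m) (y' ^ m) := (gcd_mul_left' _ _ _).dvd
    _ ∣ gcd x y ^ m := (associated_mul_unit_left _ _ hunit').dvd

theorem Ideal.isPrincipal_of_exists_mem_dvd_and_dvd {R : Type*} [CommSemiring R]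
    [WfDvdMonoid R] (I : Ideal R)
    (h : ∀ x ∈ I, ∀ y ∈ I, x ≠ 0 → y ≠ 0 → ∃ g ∈ I, g ∣ x ∧ g ∣ y) : I.IsPrincipal := by
  by_cases hI : ∃ x ∈ I, x ≠ 0
  · obtain ⟨d, ⟨hdI, hd0⟩, hmin⟩ :=
      (wellFounded_dvdNotUnit (α := R)).has_min {x | x ∈ I ∧ x ≠ 0} hI
    refine ⟨d, le_antisymm (fun x hx => ?_) ((Ideal.span_singleton_le_iff_mem I).2 hdI)⟩
    rw [Ideal.submodule_span_eq, Ideal.mem_span_singleton]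
    rcases eq_or_ne x 0 with rfl | hx0
    · exact dvd_zero d
    obtain ⟨g, hgI, hgd, hgx⟩ := h d hdI x hx hd0 hx0
    have hg0 : g ≠ 0 := by rintro rfl; exact hd0 (zero_dvd_iff.1 hgd)
    by_contra hdx
    exact hmin g ⟨hgI, hg0⟩ (dvdNotUnit_of_dvd_of_not_dvd hgd fun hdg => hdx (hdg.trans hgx))
  · push Not at hI
    rw [(Submodule.eq_bot_iff I).2 hI]
    exact bot_isPrincipal

theorem IsFractionRing.isInteger_mul_algebraMap_iff {R K : Type*} [CommRing R] [IsDomain R]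
    [UniqueFactorizationMonoid R] [Field K] [Algebra R K] [IsFractionRing R K] (c : K) (t : R) :
    IsLocalization.IsInteger R (c * algebraMap R K t) ↔ (den R c : R) ∣ t := by
  have hc : c * algebraMap R K (den R c) = algebraMap R K (num R c) :=
    num_mul_den_eq_num_iff_eq.mpr rfl
  constructor
  · rintro ⟨r, hr⟩
    have key : r * den R c = num R c * t := IsFractionRing.injective R K <| by
      rw [map_mul, map_mul, hr, ← hc]; ring
    exact (num_den_reduced R c).symm.dvd_of_dvd_mul_left (Dvd.intro_left r key)
  · rintro ⟨s, rfl⟩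
    exact ⟨num R c * s, by rw [map_mul, map_mul, ← hc]; ring⟩

theorem Polynomial.scaleRoots_algebraMap_mem_lifts_iff {R K : Type*} [CommRing R] [IsDomain R]
    [UniqueFactorizationMonoid R] [Field K] [Algebra R K] [IsFractionRing R K] (p : K[X]) (x : R) :
    p.scaleRoots (algebraMap R K x) ∈ lifts (algebraMap R K) ↔
      ∀ i, (den R (p.coeff i) : R) ∣ x ^ (p.natDegree - i) := by
  simp_rw [lifts_iff_coeff_lifts, coeff_scaleRoots, ← map_pow]
  exact forall_congr' fun i => isInteger_mul_algebraMap_iff _ _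

theorem isIntegral_iff_minpoly_mem_lifts {R K F : Type*} [CommRing R] [IsDomain R]
    [IsIntegrallyClosed R] [Field K] [Algebra R K] [IsFractionRing R K] [CommRing F] [IsDomain F]
    [Algebra R F] [Algebra K F] [IsScalarTower R K F] {z : F} (hz : IsIntegral K z) :
    IsIntegral R z ↔ minpoly K z ∈ lifts (algebraMap R K) := by
  refine ⟨fun h => ⟨minpoly R z, (minpoly.isIntegrallyClosed_eq_field_fractions' K h).symm⟩,
    fun h => ?_⟩
  obtain ⟨p, hp, -, hmonic⟩ := lifts_and_natDegree_eq_and_monic h (minpoly.monic hz)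
  exact ⟨p, hmonic, by rw [← aeval_def, ← aeval_map_algebraMap K, hp, minpoly.aeval]⟩

theorem integrality_ideal_is_principal_general {R F : Type*} [CommRing R] [IsDomain R]
    [UniqueFactorizationMonoid R] [Field F] [Algebra R F]
    (hinj : Function.Injective (algebraMap R F))
    (y : F) (halg : IsAlgebraic R y) :
    ∃ I : Ideal R,
      (∀ x : R, x ∈ I ↔ IsIntegral R (algebraMap R F x * y)) ∧
      Submodule.IsPrincipal I := by
  let := UniqueFactorizationMonoid.toGCDMonoid R
  have : FaithfulSMul R F := (faithfulSMul_iff_algebraMap_injective R F).mpr hinj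
  let := FractionRing.liftAlgebra R F
  set K := FractionRing R
  set q := minpoly K y
  have hy : IsIntegral K y := (halg.extendScalars (IsFractionRing.injective R K)).isIntegral
  have hcrit : ∀ x : R, x ≠ 0 → (IsIntegral R (algebraMap R F x * y) ↔
      ∀ i, (den R (q.coeff i) : R) ∣ x ^ (q.natDegree - i)) := by
    intro x hx
    rw [IsScalarTower.algebraMap_apply R K F, ← Algebra.smul_def,
      isIntegral_iff_minpoly_mem_lifts (hy.smul _),
      IsIntegrallyClosed.minpoly_smul
        ((map_ne_zero_iff _ (IsFractionRing.injective R K)).2 hx) hy,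
      scaleRoots_algebraMap_mem_lifts_iff]
  let I : Ideal R := (integralClosure R F).toSubmodule.comap (LinearMap.toSpanSingleton R F y)
  have hI : ∀ x : R, x ∈ I ↔ IsIntegral R (algebraMap R F x * y) := fun x => by
    rw [← Algebra.smul_def]; rfl
  refine ⟨I, hI, I.isPrincipal_of_exists_mem_dvd_and_dvd fun a ha b hb ha0 hb0 =>
    ⟨gcd a b, ?_, gcd_dvd_left a b, gcd_dvd_right a b⟩⟩
  rw [hI, hcrit a ha0] at ha
  rw [hI, hcrit b hb0] at hb
  rw [hI, hcrit _ (gcd_ne_zero_of_left ha0)]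
  exact fun i => (dvd_gcd (ha i) (hb i)).trans (gcd_pow_dvd_pow_gcd a b _)

theorem integrality_ideal_is_principal {R F : Type*} [CommRing R] [IsDomain R]
    [UniqueFactorizationMonoid R] [Field F] [Algebra R F]
    (hinj : Function.Injective (algebraMap R F))
    (y : F) (halg : IsAlgebraic R y) (hni : ¬ IsIntegral R y) :
    ∃ I : Ideal R,
      (∀ x : R, x ∈ I ↔ IsIntegral R (algebraMap R F x * y)) ∧
      Submodule.IsPrincipal I :=
  integrality_ideal_is_principal_general hinj y halg
end
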